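/- arXiv:1704.01349 — 5 statements merged into one kernel-verified Lean document; each statement's English description precedes it below -/
import Mathlib

section
/- Let G be a connected simple graph on a finite vertex set of N vertices and let s be a real number. Then the kernel of the Mellin-transformed path Laplacian L̃_Mell(s) is exactly the one-dimensional span of the all-ones vector; in particular, x satisfies L̃_Mell(s) x = 0 if and only if x is constant. -/
open Finset Matrix Filter Real Topology

/-- The `d`-path Laplacian matrix of a graph `G` on `Fin N`:
`(L_d)_{ii} = #{j : dist(i,j) = d}`, `(L_d)_{ij} = -1` if `i ≠ j` and `dist(i,j) = d`,
and `0` otherwise. -/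
noncomputable def pathLaplacian {N : ℕ} (G : SimpleGraph (Fin N)) (d : ℕ) :
    Matrix (Fin N) (Fin N) ℝ := fun i j =>
  if i = j then ((univ.filter fun k => G.dist i k = d).card : ℝ)
  else if G.dist i j = d then -1 else 0

/-- The diameter `d_max` of `G`: the maximum shortest-path distance over all pairs. -/
noncomputable def graphDiam {N : ℕ} (G : SimpleGraph (Fin N)) : ℕ :=
  univ.sup fun p : Fin N × Fin N => G.dist p.1 p.2

/-- The Mellin-transformed path Laplacian `L̃_Mell(s) = Σ_{d=1}^{d_max} d^{-s} L_d`. -/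
noncomputable def mellinLap {N : ℕ} (G : SimpleGraph (Fin N)) (s : ℝ) :
    Matrix (Fin N) (Fin N) ℝ :=
  ∑ d ∈ Icc 1 (graphDiam G), (d : ℝ) ^ (-s) • pathLaplacian G d

/-- The Laplace-transformed path Laplacian `L̃_Lapl(λ) = L_1 + Σ_{d=2}^{d_max} e^{-λd} L_d`. -/
noncomputable def laplaceLap {N : ℕ} (G : SimpleGraph (Fin N)) (lam : ℝ) :
    Matrix (Fin N) (Fin N) ℝ :=
  pathLaplacian G 1 + ∑ d ∈ Icc 2 (graphDiam G), Real.exp (-(lam * d)) • pathLaplacian G d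

/-- `λ₂(M)`: infimum of the quadratic form over Euclidean-unit vectors orthogonal to
the all-ones vector. -/
noncomputable def lamTwo {N : ℕ} (M : Matrix (Fin N) (Fin N) ℝ) : ℝ :=
  sInf {r | ∃ x : Fin N → ℝ, ∑ i, x i ^ 2 = 1 ∧ ∑ i, x i = 0 ∧ r = x ⬝ᵥ M.mulVec x}

/-- `λ_max(M)`: supremum of the quadratic form over Euclidean-unit vectors. -/
noncomputable def lamMax {N : ℕ} (M : Matrix (Fin N) (Fin N) ℝ) : ℝ :=
  sSup {r | ∃ x : Fin N → ℝ, ∑ i, x i ^ 2 = 1 ∧ r = x ⬝ᵥ M.mulVec x}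

section Aux

variable {N : ℕ} (G : SimpleGraph (Fin N)) (s : ℝ)

/-- Auxiliary weight: `(dist i j)^(-s)` off the diagonal, `0` on it. -/
noncomputable def mW (i j : Fin N) : ℝ :=
  if i = j then 0 else (G.dist i j : ℝ) ^ (-s)

lemma mW_symm (i j : Fin N) : mW G s i j = mW G s j i := by
  unfold mW
  rcases eq_or_ne i j with h | h
  · simp [h]
  · rw [if_neg h, if_neg h.symm, SimpleGraph.dist_comm]

lemma mW_nonneg (i j : Fin N) : 0 ≤ mW G s i j := by
  unfold mW
  rcases eq_or_ne i j with h | h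
  · simp [h]
  · rw [if_neg h]
    positivity

lemma dist_mem_Icc (hG : G.Connected) {i j : Fin N} (h : i ≠ j) :
    G.dist i j ∈ Finset.Icc 1 (graphDiam G) := by
  rw [Finset.mem_Icc]
  refine ⟨hG.pos_dist_of_ne h, ?_⟩
  exact Finset.le_sup (f := fun p : Fin N × Fin N => G.dist p.1 p.2)
    (Finset.mem_univ (i, j))

lemma mW_pos (hG : G.Connected) {i j : Fin N} (h : i ≠ j) : 0 < mW G s i j := by
  unfold mW
  rw [if_neg h]
  have : 0 < G.dist i j := hG.pos_dist_of_ne h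
  have : (0 : ℝ) < (G.dist i j : ℝ) := by exact_mod_cast this
  positivity

lemma mellinLap_apply_ne (hG : G.Connected) {i j : Fin N} (h : i ≠ j) :
    mellinLap G s i j = -mW G s i j := by
  unfold mellinLap mW
  rw [if_neg h]
  rw [Matrix.sum_apply]
  rw [Finset.sum_eq_single_of_mem (G.dist i j) (dist_mem_Icc G hG h)]
  · simp [pathLaplacian, if_neg h]
  · intro d _ hd
    simp [pathLaplacian, if_neg h, Ne.symm hd]

lemma mellinLap_apply_eq (hG : G.Connected) (i : Fin N) :
    mellinLap G s i i = ∑ j, mW G s i j := by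
  unfold mellinLap
  rw [Matrix.sum_apply]
  have key : ∀ d ∈ Finset.Icc 1 (graphDiam G),
      ((d : ℝ) ^ (-s) • pathLaplacian G d) i i
        = ∑ k ∈ Finset.univ.filter (fun k => k ≠ i) with G.dist i k = d,
            ((d : ℝ) ^ (-s)) := by
    intro d hd
    have hd1 : 1 ≤ d := (Finset.mem_Icc.mp hd).1
    have hfilter : (Finset.univ.filter (fun k => k ≠ i)).filter (fun k => G.dist i k = d)
        = Finset.univ.filter (fun k => G.dist i k = d) := by
      ext k
      simp only [Finset.mem_filter, Finset.mem_univ, true_and]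
      constructor
      · rintro ⟨_, h2⟩; exact h2
      · intro h2
        refine ⟨?_, h2⟩
        rintro rfl
        rw [SimpleGraph.dist_self] at h2
        omega
    rw [hfilter]
    simp [pathLaplacian, Finset.sum_const, mul_comm]
  rw [Finset.sum_congr rfl key]
  have := Finset.sum_fiberwise_of_maps_to' (s := Finset.univ.filter (fun k => k ≠ i))
      (t := Finset.Icc 1 (graphDiam G)) (g := fun k => G.dist i k)
      (fun k hk => dist_mem_Icc G hG (Finset.mem_filter.mp hk).2.symm)
      (fun d => (d : ℝ) ^ (-s))
  rw [this]
  rw [Finset.sum_filter]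
  refine Finset.sum_congr rfl fun j _ => ?_
  rcases eq_or_ne i j with h | h
  · simp [h, mW]
  · simp [mW, h, Ne.symm h]

lemma mellinLap_mulVec (hG : G.Connected) (x : Fin N → ℝ) (i : Fin N) :
    (mellinLap G s).mulVec x i = ∑ j, mW G s i j * (x i - x j) := by
  have hsplit : ∀ f : Fin N → ℝ, ∑ j, f j = f i + ∑ j ∈ Finset.univ.erase i, f j :=
    fun f => (Finset.add_sum_erase _ f (Finset.mem_univ i)).symm
  rw [Matrix.mulVec, dotProduct]
  rw [hsplit (fun j => mellinLap G s i j * x j), hsplit (fun j => mW G s i j * (x i - x j))]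
  rw [mellinLap_apply_eq G s hG i, hsplit (fun j => mW G s i j)]
  have hWii : mW G s i i = 0 := by simp [mW]
  rw [hWii]
  have h1 : ∀ j ∈ Finset.univ.erase i, mellinLap G s i j * x j
      = -(mW G s i j * x j) := by
    intro j hj
    rw [mellinLap_apply_ne G s hG (Ne.symm (Finset.mem_erase.mp hj).1)]
    ring
  rw [Finset.sum_congr rfl h1]
  rw [Finset.sum_neg_distrib]
  have h2 : ∑ j ∈ Finset.univ.erase i, mW G s i j * (x i - x j)
      = (∑ j ∈ Finset.univ.erase i, mW G s i j) * x i
        - ∑ j ∈ Finset.univ.erase i, mW G s i j * x j := by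
    rw [Finset.sum_mul, ← Finset.sum_sub_distrib]
    refine Finset.sum_congr rfl fun j _ => by ring
  rw [h2]
  ring

lemma mellinLap_quad (hG : G.Connected) (x : Fin N → ℝ) :
    2 * (∑ i, x i * (mellinLap G s).mulVec x i)
      = ∑ i, ∑ j, mW G s i j * (x i - x j) ^ 2 := by
  have h1 : ∑ i, x i * (mellinLap G s).mulVec x i
      = ∑ i, ∑ j, mW G s i j * (x i * (x i - x j)) := by
    refine Finset.sum_congr rfl fun i _ => ?_
    rw [mellinLap_mulVec G s hG, Finset.mul_sum]
    refine Finset.sum_congr rfl fun j _ => by ring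
  have h2 : ∑ i, ∑ j, mW G s i j * (x i * (x i - x j))
      = ∑ i, ∑ j, mW G s i j * (x j * (x j - x i)) := by
    rw [Finset.sum_comm]
    refine Finset.sum_congr rfl fun i _ => Finset.sum_congr rfl fun j _ => ?_
    rw [mW_symm]
  rw [h1, two_mul]
  nth_rw 2 [h2]
  rw [← Finset.sum_add_distrib]
  refine Finset.sum_congr rfl fun i _ => ?_
  rw [← Finset.sum_add_distrib]
  refine Finset.sum_congr rfl fun j _ => by ring

lemma mellinLap_mulVec_eq_zero_iff (hG : G.Connected) (x : Fin N → ℝ) :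
    (mellinLap G s).mulVec x = 0 ↔ ∃ c : ℝ, x = fun _ => c := by
  constructor
  · intro hx
    have hquad : ∑ i, ∑ j, mW G s i j * (x i - x j) ^ 2 = 0 := by
      rw [← mellinLap_quad G s hG x, hx]
      simp
    have hconst : ∀ i j : Fin N, x i = x j := by
      intro i j
      rcases eq_or_ne i j with h | h
      · rw [h]
      · have hnn : ∀ i ∈ Finset.univ, (0:ℝ) ≤ ∑ j, mW G s i j * (x i - x j) ^ 2 :=
          fun i _ => Finset.sum_nonneg fun j _ =>
            mul_nonneg (mW_nonneg G s i j) (sq_nonneg _)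
        have hi := (Finset.sum_eq_zero_iff_of_nonneg hnn).mp hquad i (Finset.mem_univ i)
        have hnn2 : ∀ j ∈ Finset.univ, (0:ℝ) ≤ mW G s i j * (x i - x j) ^ 2 :=
          fun j _ => mul_nonneg (mW_nonneg G s i j) (sq_nonneg _)
        have hij := (Finset.sum_eq_zero_iff_of_nonneg hnn2).mp hi j (Finset.mem_univ j)
        have hW := mW_pos G s hG h
        have : (x i - x j) ^ 2 = 0 := by
          by_contra hne
          exact hne (by
            rcases mul_eq_zero.mp hij with h' | h'
            · exact absurd h' (ne_of_gt hW)
            · exact h')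
        have := pow_eq_zero_iff (n := 2) (by norm_num) |>.mp this
        linarith [sub_eq_zero.mp this]
    cases isEmpty_or_nonempty (Fin N) with
    | inl h => exact ⟨0, funext fun i => (h.false i).elim⟩
    | inr h =>
      obtain ⟨i0⟩ := h
      exact ⟨x i0, funext fun i => hconst i i0⟩
  · rintro ⟨c, rfl⟩
    funext i
    rw [mellinLap_mulVec G s hG]
    simp

end Aux

/-- The kernel of the Mellin-transformed path Laplacian is exactly the span
of the all-ones vector; in particular `L̃_Mell(s) x = 0` iff `x` is constant. -/
theorem mellinLap_ker_eq_span_ones {N : ℕ} (G : SimpleGraph (Fin N)) (hG : G.Connected)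
    (s : ℝ) :
    LinearMap.ker (Matrix.toLin' (mellinLap G s)) =
        Submodule.span ℝ {(fun _ => 1 : Fin N → ℝ)} ∧
      ∀ x : Fin N → ℝ, (mellinLap G s).mulVec x = 0 ↔ ∃ c : ℝ, x = fun _ => c := by
  constructor
  · ext x
    rw [LinearMap.mem_ker, Submodule.mem_span_singleton]
    rw [Matrix.toLin'_apply]
    rw [mellinLap_mulVec_eq_zero_iff G s hG x]
    constructor
    · rintro ⟨c, rfl⟩
      exact ⟨c, funext fun i => by simp⟩
    · rintro ⟨c, rfl⟩
      exact ⟨c, funext fun i => by simp⟩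
  · exact mellinLap_mulVec_eq_zero_iff G s hG
end

section
/- Let G be a connected simple graph on a finite vertex set of N ≥ 2 vertices and let s ≥ 0 be a real number. Then (N·I − J) − L̃_Mell(s) is positive semidefinite, where N·I − J is the Laplacian of the complete graph on N vertices; consequently every eigenvalue of L̃_Mell(s) lies in the interval [0, N]. -/
open Finset Matrix Filter Real Topology

/-! Each `L_d` is the Laplacian of the symmetric 0/1 weight "distance equals `d`", so
`L̃_Mell(s)` is the weighted Laplacian with weight `d(i,j)^(-s)` on every reachable pair, while
`N·I − J` is the weighted Laplacian with all weights `1`. Weighted Laplacians are linear in the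
weight and have quadratic form `½ Σ w_ij (x_i − x_j)²`, so both `L̃_Mell(s)` and the difference,
whose weights `1 − d(i,j)^(-s)` are nonnegative for `s ≥ 0`, are positive semidefinite. Since
`J` is positive semidefinite too, `0 ≤ L̃_Mell(s) ≤ N·I` in the Loewner order, which confines
the spectrum to `[0, N]`. -/

section WeightedLaplacian

variable {n : Type*} [Fintype n] [DecidableEq n]

/-- The diagonal of `w` does not matter: it cancels. -/
noncomputable def weightedLaplacian : (n → n → ℝ) →ₗ[ℝ] Matrix n n ℝ where
  toFun w := diagonal (fun i => ∑ j, w i j) - of w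
  map_add' w w' := by
    ext i j
    by_cases h : i = j <;> simp [h, Finset.sum_add_distrib] <;> ring
  map_smul' c w := by
    ext i j
    by_cases h : i = j <;> simp [h, Finset.mul_sum, mul_sub]

lemma weightedLaplacian_apply (w : n → n → ℝ) :
    weightedLaplacian w = diagonal (fun i => ∑ j, w i j) - of w := rfl

lemma weightedLaplacian_const_one :
    weightedLaplacian (fun _ _ : n => (1 : ℝ)) = (Fintype.card n : ℝ) • 1 - of fun _ _ => 1 := by
  ext i j
  by_cases h : i = j <;> simp [weightedLaplacian_apply, h]

lemma isHermitian_weightedLaplacian {w : n → n → ℝ} (hw : ∀ i j, w i j = w j i) :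
    (weightedLaplacian w).IsHermitian := by
  ext i j
  by_cases h : i = j
  · subst h; rfl
  · simp [weightedLaplacian_apply, h, Ne.symm h, hw j i]

lemma dotProduct_weightedLaplacian_mulVec {w : n → n → ℝ} (hw : ∀ i j, w i j = w j i)
    (x : n → ℝ) :
    x ⬝ᵥ weightedLaplacian w *ᵥ x = (∑ i, ∑ j, w i j * (x i - x j) ^ 2) / 2 := by
  set S := ∑ i, ∑ j, w i j * (x i ^ 2 - x i * x j)
  have hform : x ⬝ᵥ weightedLaplacian w *ᵥ x = S := by
    rw [weightedLaplacian_apply, sub_mulVec, dotProduct_sub]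
    simp only [dotProduct, mulVec_diagonal]
    simp only [mulVec, dotProduct, of_apply, Finset.sum_mul, Finset.mul_sum,
      ← Finset.sum_sub_distrib, S]
    exact Finset.sum_congr rfl fun i _ => Finset.sum_congr rfl fun j _ => by ring
  have hsymm : ∑ i, ∑ j, w i j * (x i - x j) ^ 2 = S + S := calc
    _ = ∑ i, ∑ j, (w i j * (x i ^ 2 - x i * x j) + w j i * (x j ^ 2 - x j * x i)) :=
      Finset.sum_congr rfl fun i _ => Finset.sum_congr rfl fun j _ => by rw [hw j i]; ring
    _ = S + ∑ i, ∑ j, w j i * (x j ^ 2 - x j * x i) := by simp only [Finset.sum_add_distrib, S]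
    _ = S + S := by rw [Finset.sum_comm]
  rw [hform, hsymm]
  ring

lemma posSemidef_weightedLaplacian {w : n → n → ℝ} (hw : ∀ i j, w i j = w j i)
    (hw_nonneg : ∀ i j, i ≠ j → 0 ≤ w i j) : (weightedLaplacian w).PosSemidef := by
  refine .of_dotProduct_mulVec_nonneg (isHermitian_weightedLaplacian hw) fun x => ?_
  rw [star_trivial, dotProduct_weightedLaplacian_mulVec hw]
  refine div_nonneg (Finset.sum_nonneg fun i _ => Finset.sum_nonneg fun j _ => ?_) two_pos.le
  obtain rfl | hij := eq_or_ne i j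
  · simp
  · exact mul_nonneg (hw_nonneg i j hij) (sq_nonneg _)

end WeightedLaplacian

lemma Matrix.PosSemidef.spectrum_subset_Icc {n : Type*} [Fintype n] [DecidableEq n]
    {A : Matrix n n ℝ} {c : ℝ} (hA : A.PosSemidef) (hcA : (c • 1 - A).PosSemidef) :
    spectrum ℝ A ⊆ Set.Icc 0 c := by
  intro μ hμ
  have hcμ : c - μ ∈ spectrum ℝ (c • 1 - A) := by
    rw [← Algebra.algebraMap_eq_smul_one, ← spectrum.singleton_sub_eq]
    exact Set.sub_mem_sub rfl hμ
  exact ⟨(posSemidef_iff_isHermitian_and_spectrum_nonneg.mp hA).2 hμ,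
    sub_nonneg.mp ((posSemidef_iff_isHermitian_and_spectrum_nonneg.mp hcA).2 hcμ)⟩

section PathLaplacian

variable {N : ℕ} (G : SimpleGraph (Fin N))

lemma pathLaplacian_eq_weightedLaplacian {d : ℕ} (hd : d ≠ 0) :
    pathLaplacian G d = weightedLaplacian fun i j => if G.dist i j = d then 1 else 0 := by
  ext i j
  obtain rfl | hij := eq_or_ne i j
  · simp [pathLaplacian, weightedLaplacian_apply, Finset.sum_boole, Ne.symm hd]
  · simp only [pathLaplacian, weightedLaplacian_apply, Matrix.sub_apply, diagonal_apply_ne _ hij,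
      of_apply, if_neg hij]
    split_ifs <;> simp

lemma dist_le_graphDiam (i j : Fin N) : G.dist i j ≤ graphDiam G :=
  Finset.le_sup (f := fun p : Fin N × Fin N => G.dist p.1 p.2) (Finset.mem_univ (i, j))

/-- `G.dist` is also `0` between unreachable vertices, so the weight vanishes there. -/
noncomputable def mellinWeight (s : ℝ) (i j : Fin N) : ℝ :=
  if G.dist i j = 0 then 0 else (G.dist i j : ℝ) ^ (-s)

lemma mellinWeight_comm (s : ℝ) (i j : Fin N) : mellinWeight G s i j = mellinWeight G s j i := by
  rw [mellinWeight, mellinWeight, SimpleGraph.dist_comm]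

lemma mellinWeight_nonneg (s : ℝ) (i j : Fin N) : 0 ≤ mellinWeight G s i j := by
  unfold mellinWeight
  split_ifs <;> positivity

lemma mellinWeight_le_one {s : ℝ} (hs : 0 ≤ s) (i j : Fin N) : mellinWeight G s i j ≤ 1 := by
  unfold mellinWeight
  split_ifs with h
  · exact zero_le_one
  · exact Real.rpow_le_one_of_one_le_of_nonpos (mod_cast Nat.one_le_iff_ne_zero.mpr h)
      (neg_nonpos.mpr hs)

lemma mellinLap_eq_weightedLaplacian (s : ℝ) :
    mellinLap G s = weightedLaplacian (mellinWeight G s) := by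
  have hterm : ∀ d ∈ Icc 1 (graphDiam G), (d : ℝ) ^ (-s) • pathLaplacian G d =
      weightedLaplacian fun i j => if G.dist i j = d then (d : ℝ) ^ (-s) else 0 := by
    intro d hd
    rw [pathLaplacian_eq_weightedLaplacian G (by grind), ← map_smul]
    congr 1
    ext i j
    simp
  rw [mellinLap, Finset.sum_congr rfl hterm, ← map_sum]
  congr 1
  ext i j
  rw [Finset.sum_apply, Finset.sum_apply, Finset.sum_ite_eq, mellinWeight]
  have := dist_le_graphDiam G i j
  split_ifs <;> grind

lemma complete_sub_mellinLap_eq_weightedLaplacian (s : ℝ) :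
    (N : ℝ) • (1 : Matrix (Fin N) (Fin N) ℝ) - of (fun _ _ => (1 : ℝ)) - mellinLap G s =
      weightedLaplacian fun i j => 1 - mellinWeight G s i j := by
  have hcomplete := weightedLaplacian_const_one (n := Fin N)
  rw [Fintype.card_fin] at hcomplete
  rw [← hcomplete, mellinLap_eq_weightedLaplacian, ← map_sub]
  rfl

end PathLaplacian

theorem complete_sub_mellinLap_posSemidef_general {N : ℕ} (G : SimpleGraph (Fin N))
    (s : ℝ) (hs : 0 ≤ s) :
    ((N : ℝ) • (1 : Matrix (Fin N) (Fin N) ℝ) - Matrix.of (fun _ _ => (1 : ℝ)) -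
        mellinLap G s).PosSemidef ∧
      ∀ μ : ℝ, Module.End.HasEigenvalue (Matrix.toLin' (mellinLap G s)) μ →
        μ ∈ Set.Icc (0 : ℝ) (N : ℝ) := by
  have hM : (mellinLap G s).PosSemidef := by
    rw [mellinLap_eq_weightedLaplacian]
    exact posSemidef_weightedLaplacian (mellinWeight_comm G s)
      fun i j _ => mellinWeight_nonneg G s i j
  have hD : ((N : ℝ) • 1 - of (fun _ _ => (1 : ℝ)) - mellinLap G s).PosSemidef := by
    rw [complete_sub_mellinLap_eq_weightedLaplacian]
    exact posSemidef_weightedLaplacian (fun i j => by rw [mellinWeight_comm])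
      fun i j _ => sub_nonneg.mpr (mellinWeight_le_one G hs i j)
  have hJ : (of fun _ _ : Fin N => (1 : ℝ)).PosSemidef := by
    simpa [vecMulVec] using posSemidef_vecMulVec_self_star (fun _ : Fin N => (1 : ℝ))
  refine ⟨hD, fun μ hμ => hM.spectrum_subset_Icc ?_ ?_⟩
  · convert hD.add hJ using 1
    abel
  · rwa [Module.End.hasEigenvalue_iff_mem_spectrum, spectrum_toLin'] at hμ

/-- For `s ≥ 0`, `(N·I − J) − L̃_Mell(s)` is positive semidefinite, and
consequently every eigenvalue of `L̃_Mell(s)` lies in `[0, N]`. -/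
theorem complete_sub_mellinLap_posSemidef {N : ℕ} (G : SimpleGraph (Fin N))
    (hG : G.Connected) (hN : 2 ≤ N) (s : ℝ) (hs : 0 ≤ s) :
    ((N : ℝ) • (1 : Matrix (Fin N) (Fin N) ℝ) - Matrix.of (fun _ _ => (1 : ℝ)) -
        mellinLap G s).PosSemidef ∧
      ∀ μ : ℝ, Module.End.HasEigenvalue (Matrix.toLin' (mellinLap G s)) μ →
        μ ∈ Set.Icc (0 : ℝ) (N : ℝ) :=
  complete_sub_mellinLap_posSemidef_general G s hs
end

section
/- Let G be a connected simple graph on a finite vertex set of N ≥ 2 vertices. For a real symmetric N×N matrix M let λ₂(M) denote the infimum of xᵀMx over unit vectors x orthogonal to the all-ones vector. Then for real numbers s' ≤ s one has λ₂(L̃_Mell(s')) ≥ λ₂(L̃_Mell(s)); that is, the algebraic connectivity of the Mellin-transformed path Laplacian is non-increasing in s. -/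
open Finset Matrix Filter Real Topology

lemma pathLap_eq {N : ℕ} (G : SimpleGraph (Fin N)) {d : ℕ} (hd : 1 ≤ d) (i j : Fin N) :
    pathLaplacian G d i j =
      (if i = j then ∑ k, (if G.dist i k = d then (1:ℝ) else 0) else 0)
        - (if G.dist i j = d then (1:ℝ) else 0) := by
  unfold pathLaplacian
  by_cases h : i = j
  · subst h
    simp only [if_pos rfl]
    rw [Finset.card_filter]
    have : G.dist i i = 0 := by simp
    simp [this, Nat.one_le_iff_ne_zero.mp hd, (Nat.one_le_iff_ne_zero.mp hd).symm]
  · simp only [if_neg h]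
    by_cases h2 : G.dist i j = d <;> simp [h2]

lemma quad_pathLap_nonneg {N : ℕ} (G : SimpleGraph (Fin N)) {d : ℕ} (hd : 1 ≤ d)
    (x : Fin N → ℝ) : 0 ≤ x ⬝ᵥ (pathLaplacian G d).mulVec x := by
  set A : Fin N → Fin N → ℝ := fun i j => if G.dist i j = d then (1:ℝ) else 0 with hA
  have hAsymm : ∀ i j, A i j = A j i := by
    intro i j; simp only [hA, SimpleGraph.dist_comm]
  have step1 : x ⬝ᵥ (pathLaplacian G d).mulVec x
      = ∑ i, ((∑ j, A i j * x i ^ 2) - (∑ j, A i j * (x i * x j))) := by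
    unfold dotProduct Matrix.mulVec dotProduct
    refine Finset.sum_congr rfl fun i _ => ?_
    rw [Finset.mul_sum]
    have t1 : ∀ j, x i * (pathLaplacian G d i j * x j)
        = (if i = j then (∑ k, A i k) * (x i * x j) else 0) - A i j * (x i * x j) := by
      intro j
      rw [pathLap_eq G hd i j]
      by_cases h : i = j
      · simp only [if_pos h]; ring
      · simp only [if_neg h]; ring
    simp only [t1]
    rw [Finset.sum_sub_distrib, Finset.sum_ite_eq, if_pos (Finset.mem_univ i),
      Finset.sum_mul]
    congr 1
    exact Finset.sum_congr rfl fun j _ => by ring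
  have step1' : x ⬝ᵥ (pathLaplacian G d).mulVec x
      = (∑ i, ∑ j, A i j * x i ^ 2) - (∑ i, ∑ j, A i j * (x i * x j)) := by
    rw [step1, Finset.sum_sub_distrib]
  have hS : ∑ i, ∑ j, A i j * x j ^ 2 = ∑ i, ∑ j, A i j * x i ^ 2 := by
    rw [Finset.sum_comm]
    exact Finset.sum_congr rfl fun i _ => Finset.sum_congr rfl fun j _ => by rw [hAsymm]
  have step2 : ∑ i, ∑ j, A i j * (x i - x j) ^ 2
      = (∑ i, ∑ j, A i j * x i ^ 2) + (∑ i, ∑ j, A i j * x j ^ 2)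
        - 2 * (∑ i, ∑ j, A i j * (x i * x j)) := by
    rw [← Finset.sum_add_distrib, Finset.mul_sum, ← Finset.sum_sub_distrib]
    refine Finset.sum_congr rfl fun i _ => ?_
    rw [← Finset.sum_add_distrib, Finset.mul_sum, ← Finset.sum_sub_distrib]
    exact Finset.sum_congr rfl fun j _ => by ring
  have hnn : 0 ≤ ∑ i, ∑ j, A i j * (x i - x j) ^ 2 := by
    refine Finset.sum_nonneg fun i _ => Finset.sum_nonneg fun j _ => mul_nonneg ?_ (by positivity)
    simp only [hA]; split <;> norm_num
  linarith [step1', step2, hS, hnn]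


lemma quad_mellin_eq {N : ℕ} (G : SimpleGraph (Fin N)) (s : ℝ) (x : Fin N → ℝ) :
    x ⬝ᵥ (mellinLap G s).mulVec x
      = ∑ d ∈ Icc 1 (graphDiam G), (d : ℝ) ^ (-s) * (x ⬝ᵥ (pathLaplacian G d).mulVec x) := by
  unfold mellinLap dotProduct Matrix.mulVec dotProduct
  simp only [Matrix.sum_apply, Matrix.smul_apply, smul_eq_mul, Finset.sum_mul,
    Finset.mul_sum]
  conv_rhs => rw [Finset.sum_comm]
  refine Finset.sum_congr rfl fun i _ => ?_
  rw [Finset.sum_comm]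
  refine Finset.sum_congr rfl fun d _ => Finset.sum_congr rfl fun j _ => by ring

lemma set_bddBelow {N : ℕ} (M : Matrix (Fin N) (Fin N) ℝ) :
    BddBelow {r | ∃ x : Fin N → ℝ, ∑ i, x i ^ 2 = 1 ∧ ∑ i, x i = 0 ∧ r = x ⬝ᵥ M.mulVec x} := by
  refine ⟨-∑ i, ∑ j, |M i j|, ?_⟩
  rintro r ⟨x, hx1, -, rfl⟩
  have hxb : ∀ i, |x i| ≤ 1 := by
    intro i
    rw [← sq_le_one_iff_abs_le_one]
    calc x i ^ 2 ≤ ∑ k, x k ^ 2 :=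
          Finset.single_le_sum (fun k _ => sq_nonneg (x k)) (Finset.mem_univ i)
      _ = 1 := hx1
  unfold dotProduct Matrix.mulVec dotProduct
  simp only [Finset.mul_sum]
  rw [← Finset.sum_neg_distrib]
  refine Finset.sum_le_sum fun i _ => ?_
  rw [← Finset.sum_neg_distrib]
  refine Finset.sum_le_sum fun j _ => ?_
  have h1 : |x i * (M i j * x j)| ≤ |M i j| := by
    rw [abs_mul, abs_mul]
    calc |x i| * (|M i j| * |x j|) ≤ 1 * (|M i j| * 1) := by
          apply mul_le_mul (hxb i) ?_ (by positivity) zero_le_one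
          exact mul_le_mul_of_nonneg_left (hxb j) (abs_nonneg _)
      _ = |M i j| := by ring
  linarith [neg_abs_le (x i * (M i j * x j))]

/-- For `s' ≤ s`, `λ₂(L̃_Mell(s')) ≥ λ₂(L̃_Mell(s))`: the algebraic
connectivity of the Mellin-transformed path Laplacian is non-increasing in `s`. -/
theorem lamTwo_mellinLap_antitone {N : ℕ} (G : SimpleGraph (Fin N)) (hG : G.Connected)
    (hN : 2 ≤ N) (s' s : ℝ) (hs : s' ≤ s) :
    lamTwo (mellinLap G s) ≤ lamTwo (mellinLap G s') := by
  apply le_csInf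
  · -- the constraint set is nonempty
    have h0 : (0:ℕ) < N := by omega
    have h1 : (1:ℕ) < N := by omega
    set i0 : Fin N := ⟨0, h0⟩
    set i1 : Fin N := ⟨1, h1⟩
    have hne : i0 ≠ i1 := by simp [i0, i1, Fin.ext_iff]
    set a : ℝ := Real.sqrt (1/2) with ha
    have ha2 : a ^ 2 = 1/2 := Real.sq_sqrt (by norm_num)
    set x : Fin N → ℝ := fun i => if i = i0 then a else if i = i1 then -a else 0 with hx
    have hsq : ∑ i, x i ^ 2 = 1 := by
      have : ∀ i, x i ^ 2 = (if i = i0 then a ^ 2 else 0) + (if i = i1 then a ^ 2 else 0) := by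
        intro i
        by_cases h : i = i0
        · have : i ≠ i1 := by rw [h]; exact hne
          simp [hx, h, this, hne]
        · by_cases h' : i = i1 <;> simp [hx, h, h', hne, hne.symm]
      simp only [this, Finset.sum_add_distrib, Finset.sum_ite_eq', Finset.mem_univ, if_pos]
      rw [ha2]; norm_num
    have hsum : ∑ i, x i = 0 := by
      have : ∀ i, x i = (if i = i0 then a else 0) + (if i = i1 then -a else 0) := by
        intro i
        by_cases h : i = i0
        · have : i ≠ i1 := by rw [h]; exact hne
          simp [hx, h, this, hne]
        · by_cases h' : i = i1 <;> simp [hx, h, h', hne, hne.symm]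
      simp only [this, Finset.sum_add_distrib, Finset.sum_ite_eq', Finset.mem_univ, if_pos]
      ring
    exact ⟨_, x, hsq, hsum, rfl⟩
  · rintro r ⟨y, hy1, hy2, rfl⟩
    have h1 : lamTwo (mellinLap G s) ≤ y ⬝ᵥ (mellinLap G s).mulVec y :=
      csInf_le (set_bddBelow _) ⟨y, hy1, hy2, rfl⟩
    refine h1.trans ?_
    rw [quad_mellin_eq, quad_mellin_eq]
    refine Finset.sum_le_sum fun d hd => ?_
    have hd1 : 1 ≤ d := (Finset.mem_Icc.mp hd).1
    have hq := quad_pathLap_nonneg G hd1 y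
    have hle : (d:ℝ) ^ (-s) ≤ (d:ℝ) ^ (-s') :=
      Real.rpow_le_rpow_of_exponent_le (by exact_mod_cast hd1) (neg_le_neg hs)
    exact mul_le_mul_of_nonneg_right hle hq
end

section
/- Let G be a connected simple graph on a finite vertex set of N ≥ 2 vertices. For real numbers λ' ≤ λ one has λ₂(L̃_Lapl(λ')) ≥ λ₂(L̃_Lapl(λ)) and λ_max(L̃_Lapl(λ')) ≥ λ_max(L̃_Lapl(λ)); that is, both the algebraic connectivity and the largest eigenvalue of the Laplace-transformed path Laplacian are non-increasing in the parameter λ. -/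
open Finset Matrix Filter Real Topology

lemma quad_eq {N : ℕ} (G : SimpleGraph (Fin N)) (d : ℕ) (hd : d ≠ 0) (x : Fin N → ℝ) :
    x ⬝ᵥ (pathLaplacian G d).mulVec x =
      (∑ i, ∑ j, if G.dist i j = d then (x i - x j)^2 else 0) / 2 := by
  have hsplit : ∀ i j : Fin N, x i * (pathLaplacian G d i j * x j) =
      (if i = j then ((univ.filter fun k => G.dist i k = d).card : ℝ) * x i ^ 2 else 0)
      + (if G.dist i j = d then -(x i * x j) else 0) := by
    intro i j
    unfold pathLaplacian
    split_ifs with h1 h2 h2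
    · subst h1; rw [SimpleGraph.dist_self] at h2; exact absurd h2.symm hd
    · subst h1; ring
    · ring
    · ring
  have hcard : ∀ i : Fin N, ((univ.filter fun k => G.dist i k = d).card : ℝ) * x i ^ 2
      = ∑ j, if G.dist i j = d then x i ^ 2 else 0 := by
    intro i
    rw [← Finset.sum_filter, Finset.sum_const, nsmul_eq_mul, mul_comm]
  have expand : x ⬝ᵥ (pathLaplacian G d).mulVec x
      = (∑ i, ∑ j, if G.dist i j = d then x i ^ 2 else 0)
        + ∑ i, ∑ j, (if G.dist i j = d then -(x i * x j) else 0) := by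
    rw [← Finset.sum_add_distrib]
    simp only [dotProduct, mulVec, dotProduct, Finset.mul_sum]
    refine Finset.sum_congr rfl fun i _ => ?_
    simp only [hsplit]
    rw [Finset.sum_add_distrib, Finset.sum_ite_eq, if_pos (Finset.mem_univ i), hcard]
  have hswap : ∑ i, ∑ j, (if G.dist i j = d then x j ^ 2 else 0)
      = ∑ i, ∑ j, (if G.dist i j = d then x i ^ 2 else 0) := by
    rw [Finset.sum_comm]
    refine Finset.sum_congr rfl fun i _ => Finset.sum_congr rfl fun j _ => ?_
    rw [SimpleGraph.dist_comm]
  have hsq : ∑ i, ∑ j, (if G.dist i j = d then (x i - x j)^2 else 0)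
      = (∑ i, ∑ j, if G.dist i j = d then x i ^ 2 else 0)
        + (∑ i, ∑ j, if G.dist i j = d then x j ^ 2 else 0)
        + 2 * ∑ i, ∑ j, (if G.dist i j = d then -(x i * x j) else 0) := by
    rw [Finset.mul_sum, ← Finset.sum_add_distrib, ← Finset.sum_add_distrib]
    refine Finset.sum_congr rfl fun i _ => ?_
    rw [Finset.mul_sum, ← Finset.sum_add_distrib, ← Finset.sum_add_distrib]
    refine Finset.sum_congr rfl fun j _ => ?_
    split_ifs <;> ring
  rw [expand, hsq, hswap]; ring

lemma quad_nonneg {N : ℕ} (G : SimpleGraph (Fin N)) (d : ℕ) (hd : d ≠ 0) (x : Fin N → ℝ) :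
    0 ≤ x ⬝ᵥ (pathLaplacian G d).mulVec x := by
  rw [quad_eq G d hd x]
  apply div_nonneg _ (by norm_num)
  apply Finset.sum_nonneg; intro i _
  apply Finset.sum_nonneg; intro j _
  split_ifs <;> positivity

lemma laplace_quad {N : ℕ} (G : SimpleGraph (Fin N)) (lam : ℝ) (x : Fin N → ℝ) :
    x ⬝ᵥ (laplaceLap G lam).mulVec x = x ⬝ᵥ (pathLaplacian G 1).mulVec x
      + ∑ d ∈ Icc 2 (graphDiam G),
          Real.exp (-(lam * d)) * (x ⬝ᵥ (pathLaplacian G d).mulVec x) := by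
  unfold laplaceLap
  simp only [Matrix.add_mulVec, dotProduct_add]
  congr 1
  induction (Icc 2 (graphDiam G)) using Finset.induction_on with
  | empty => simp
  | insert _ _ hnotmem ih =>
      rw [Finset.sum_insert hnotmem, Finset.sum_insert hnotmem, Matrix.add_mulVec,
        dotProduct_add, ih, Matrix.smul_mulVec, dotProduct_smul, smul_eq_mul]

lemma laplace_quad_nonneg {N : ℕ} (G : SimpleGraph (Fin N)) (lam : ℝ) (x : Fin N → ℝ) :
    0 ≤ x ⬝ᵥ (laplaceLap G lam).mulVec x := by
  rw [laplace_quad]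
  refine add_nonneg (quad_nonneg G 1 one_ne_zero x) (Finset.sum_nonneg fun d hd => ?_)
  have : d ≠ 0 := by rw [Finset.mem_Icc] at hd; omega
  exact mul_nonneg (Real.exp_nonneg _) (quad_nonneg G d this x)

lemma laplace_quad_mono {N : ℕ} (G : SimpleGraph (Fin N)) {lam' lam : ℝ} (hlam : lam' ≤ lam)
    (x : Fin N → ℝ) :
    x ⬝ᵥ (laplaceLap G lam).mulVec x ≤ x ⬝ᵥ (laplaceLap G lam').mulVec x := by
  rw [laplace_quad, laplace_quad]
  refine add_le_add le_rfl (Finset.sum_le_sum fun d hd => ?_)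
  have hd0 : d ≠ 0 := by rw [Finset.mem_Icc] at hd; omega
  refine mul_le_mul_of_nonneg_right ?_ (quad_nonneg G d hd0 x)
  apply Real.exp_le_exp.mpr
  have : (0:ℝ) ≤ d := Nat.cast_nonneg d
  nlinarith

lemma quad_bound {N : ℕ} (M : Matrix (Fin N) (Fin N) ℝ) (x : Fin N → ℝ)
    (hx : ∑ i, x i ^ 2 = 1) : x ⬝ᵥ M.mulVec x ≤ ∑ i, ∑ j, |M i j| := by
  have habs : ∀ i, |x i| ≤ 1 := by
    intro i
    have h1 : x i ^ 2 ≤ 1 := hx ▸ Finset.single_le_sum (f := fun i => x i ^ 2)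
      (fun j _ => sq_nonneg _) (Finset.mem_univ i)
    nlinarith [abs_nonneg (x i), sq_abs (x i)]
  simp only [dotProduct, mulVec, dotProduct]
  refine le_trans (le_abs_self _) (le_trans (Finset.abs_sum_le_sum_abs _ _) ?_)
  refine Finset.sum_le_sum fun i _ => ?_
  rw [abs_mul]
  calc |x i| * |∑ j, M i j * x j| ≤ 1 * |∑ j, M i j * x j| :=
        mul_le_mul_of_nonneg_right (habs i) (abs_nonneg _)
    _ = |∑ j, M i j * x j| := one_mul _
    _ ≤ ∑ j, |M i j * x j| := Finset.abs_sum_le_sum_abs _ _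
    _ ≤ ∑ j, |M i j| := by
        refine Finset.sum_le_sum fun j _ => ?_
        rw [abs_mul]
        calc |M i j| * |x j| ≤ |M i j| * 1 :=
              mul_le_mul_of_nonneg_left (habs j) (abs_nonneg _)
          _ = |M i j| := mul_one _

/-- a witness vector -/
lemma witness {N : ℕ} (hN : 2 ≤ N) :
    ∃ x : Fin N → ℝ, ∑ i, x i ^ 2 = 1 ∧ ∑ i, x i = 0 := by
  have h01 : (⟨0, by omega⟩ : Fin N) ≠ ⟨1, by omega⟩ := by
    intro h; simpa using congrArg Fin.val h
  set i0 : Fin N := ⟨0, by omega⟩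
  set i1 : Fin N := ⟨1, by omega⟩
  set a : ℝ := (Real.sqrt 2)⁻¹
  have ha : a ^ 2 = 1 / 2 := by
    rw [inv_pow, Real.sq_sqrt (by norm_num : (0:ℝ) ≤ 2)]
    norm_num
  refine ⟨fun k => if k = i0 then a else if k = i1 then -a else 0, ?_, ?_⟩
  · have hp : ∀ k : Fin N, (if k = i0 then a else if k = i1 then -a else 0) ^ 2
        = (if k = i0 then a ^ 2 else 0) + (if k = i1 then a ^ 2 else 0) := by
      intro k
      split_ifs with h1 h2 h2
      · exact absurd (h1 ▸ h2 : i0 = i1) h01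
      · ring
      · ring
      · ring
    simp only [hp]
    rw [Finset.sum_add_distrib, Finset.sum_ite_eq', Finset.sum_ite_eq',
      if_pos (Finset.mem_univ _), if_pos (Finset.mem_univ _), ha]
    norm_num
  · have hp : ∀ k : Fin N, (if k = i0 then a else if k = i1 then -a else 0)
        = (if k = i0 then a else 0) + (if k = i1 then -a else 0) := by
      intro k
      split_ifs with h1 h2 h2
      · exact absurd (h1 ▸ h2 : i0 = i1) h01
      · ring
      · ring
      · ring
    simp only [hp]
    rw [Finset.sum_add_distrib, Finset.sum_ite_eq', Finset.sum_ite_eq',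
      if_pos (Finset.mem_univ _), if_pos (Finset.mem_univ _)]
    ring

/-- For `λ' ≤ λ`, both `λ₂(L̃_Lapl(λ')) ≥ λ₂(L̃_Lapl(λ))` and
`λ_max(L̃_Lapl(λ')) ≥ λ_max(L̃_Lapl(λ))`: the algebraic connectivity and the largest
eigenvalue of the Laplace-transformed path Laplacian are non-increasing in `λ`. -/
theorem lamTwo_lamMax_laplaceLap_antitone {N : ℕ} (G : SimpleGraph (Fin N))
    (hG : G.Connected) (hN : 2 ≤ N) (lam' lam : ℝ) (hlam : lam' ≤ lam) :
    lamTwo (laplaceLap G lam) ≤ lamTwo (laplaceLap G lam') ∧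
      lamMax (laplaceLap G lam) ≤ lamMax (laplaceLap G lam') := by
  obtain ⟨x0, hx0sq, hx0sum⟩ := witness hN
  constructor
  · -- lamTwo
    have hbdd : BddBelow {r | ∃ x : Fin N → ℝ, ∑ i, x i ^ 2 = 1 ∧ ∑ i, x i = 0 ∧
        r = x ⬝ᵥ (laplaceLap G lam).mulVec x} := by
      refine ⟨0, fun r hr => ?_⟩
      obtain ⟨x, _, _, rfl⟩ := hr
      exact laplace_quad_nonneg G lam x
    have hne : {r | ∃ x : Fin N → ℝ, ∑ i, x i ^ 2 = 1 ∧ ∑ i, x i = 0 ∧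
        r = x ⬝ᵥ (laplaceLap G lam').mulVec x}.Nonempty :=
      ⟨_, x0, hx0sq, hx0sum, rfl⟩
    refine le_csInf hne ?_
    rintro r ⟨x, hx1, hx2, rfl⟩
    calc lamTwo (laplaceLap G lam) ≤ x ⬝ᵥ (laplaceLap G lam).mulVec x :=
          csInf_le hbdd ⟨x, hx1, hx2, rfl⟩
      _ ≤ x ⬝ᵥ (laplaceLap G lam').mulVec x := laplace_quad_mono G hlam x
  · -- lamMax
    have hbdd : BddAbove {r | ∃ x : Fin N → ℝ, ∑ i, x i ^ 2 = 1 ∧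
        r = x ⬝ᵥ (laplaceLap G lam').mulVec x} := by
      refine ⟨∑ i, ∑ j, |laplaceLap G lam' i j|, fun r hr => ?_⟩
      obtain ⟨x, hx1, rfl⟩ := hr
      exact quad_bound _ x hx1
    have hne : {r | ∃ x : Fin N → ℝ, ∑ i, x i ^ 2 = 1 ∧
        r = x ⬝ᵥ (laplaceLap G lam).mulVec x}.Nonempty :=
      ⟨_, x0, hx0sq, rfl⟩
    refine csSup_le hne ?_
    rintro r ⟨x, hx1, rfl⟩
    calc x ⬝ᵥ (laplaceLap G lam).mulVec x ≤ x ⬝ᵥ (laplaceLap G lam').mulVec x :=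
          laplace_quad_mono G hlam x
      _ ≤ lamMax (laplaceLap G lam') := le_csSup hbdd ⟨x, hx1, rfl⟩
end

section
/- Let S_N be the star graph on N ≥ 3 vertices (one center adjacent to all N − 1 leaves, no other edges) and let s be a real number. Then the eigenvalues of the Mellin-transformed path Laplacian L̃_Mell(s) of S_N are: 0 with multiplicity 1, N with multiplicity 1, and 1 + (N − 1)·2^{−s} with multiplicity N − 2. Equivalently, each eigenvalue of L̃_Mell(s) has the form λ_i(K_N)·2^{−s} + λ_i(L)·(1 − 2^{−s}), where λ_i(K_N) and λ_i(L) are corresponding eigenvalues of the complete-graph Laplacian and of the star Laplacian. -/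
/-!
Every `L̃_Mell(s)` has zero row sums and off-diagonal entries `-d(i,j)^{-s}`; on the star these
are `-1` on edges and `-t` between two leaves, `t = 2^{-s}`. Hence
`L̃_Mell(s) - μ I`, with `μ = 1 + (N - 1) t`, has rank two: it is `A B` where the columns of
`A` are `𝟙` and `e₀`. Since `X^2 χ(A B) = X^N χ(B A)`, everything reduces to the `2 × 2` matrix
`B A`, which is upper triangular with diagonal `-μ, (N - 1)(1 - t)`. Shifting back by `μ` gives
the eigenvalues `0`, `μ + (N - 1)(1 - t) = N`, and `μ` with multiplicity `N - 2`.
-/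

open Finset Matrix Filter Real Topology

/-- The star graph on `Fin N`: the vertex `0` is adjacent to all other vertices,
and there are no other edges. -/
def starGraph (N : ℕ) : SimpleGraph (Fin N) where
  Adj i j := i ≠ j ∧ ((i : ℕ) = 0 ∨ (j : ℕ) = 0)
  symm := ⟨fun i j h => ⟨h.1.symm, h.2.symm⟩⟩
  loopless := ⟨fun i h => h.1 rfl⟩

open Polynomial

namespace Matrix

variable {n R : Type*} [Fintype n] [DecidableEq n]

theorem charpoly_add_scalar [CommRing R] (M : Matrix n n R) (μ : R) :
    (M + scalar n μ).charpoly = M.charpoly.comp (X - C μ) := by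
  simpa [sub_eq_add_neg] using charpoly_sub_scalar M (-μ)

theorem ext_of_offDiag_of_mulVec_one [NonAssocRing R] {M M' : Matrix n n R}
    (hoff : ∀ i j, i ≠ j → M i j = M' i j) (hsum : M *ᵥ 1 = M' *ᵥ 1) : M = M' := by
  ext i j
  obtain rfl | hij := eq_or_ne i j
  · have hrow := congrFun hsum i
    simp only [mulVec, dotProduct, Pi.one_apply, mul_one] at hrow
    rw [← add_sum_erase _ _ (mem_univ i), ← add_sum_erase _ _ (mem_univ i),
      sum_congr rfl fun j hj => hoff i j (ne_of_mem_erase hj).symm] at hrow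
    exact add_right_cancel hrow
  · exact hoff i j hij

end Matrix

theorem Fin.sum_ite_eq_zero {N : ℕ} [NeZero N] {R : Type*} [Ring R] (a b : R) :
    ∑ j : Fin N, (if j = 0 then a else b) = a + (N - 1) * b := by
  rw [sum_ite, filter_eq', filter_ne']
  simp [card_erase_of_mem, Nat.cast_sub NeZero.one_le]

section PathLaplacian

variable {N : ℕ} (G : SimpleGraph (Fin N))

theorem pathLaplacian_mulVec_one {d : ℕ} (hd : d ≠ 0) : pathLaplacian G d *ᵥ 1 = 0 := by
  ext i
  have hentry : ∀ j, pathLaplacian G d i j =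
      (if i = j then (#{k | G.dist i k = d} : ℝ) else 0) - if G.dist i j = d then 1 else 0 := by
    intro j
    unfold pathLaplacian
    split_ifs <;> simp_all
  simp [mulVec, dotProduct, hentry, sum_sub_distrib]

theorem mellinLap_mulVec_one (s : ℝ) : mellinLap G s *ᵥ 1 = 0 := by
  rw [mellinLap, sum_mulVec]
  refine sum_eq_zero fun d hd => ?_
  rw [smul_mulVec, pathLaplacian_mulVec_one G (by grind), smul_zero]

theorem mellinLap_apply_of_dist_ne_zero (s : ℝ) {i j : Fin N} (h : G.dist i j ≠ 0) :
    mellinLap G s i j = -(G.dist i j : ℝ) ^ (-s) := by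
  have hij : i ≠ j := (SimpleGraph.dist_ne_zero_iff_ne_and_reachable.1 h).1
  have hmem : G.dist i j ∈ Icc 1 (graphDiam G) :=
    mem_Icc.2 ⟨Nat.one_le_iff_ne_zero.2 h,
      le_sup (f := fun p : Fin N × Fin N => G.dist p.1 p.2) (mem_univ (i, j))⟩
  simp [mellinLap, Matrix.sum_apply, pathLaplacian, hij, eq_comm (a := G.dist i j), hmem]

end PathLaplacian

section StarGraph

variable {N : ℕ} [NeZero N]

theorem starGraph_adj {i j : Fin N} : (starGraph N).Adj i j ↔ i ≠ j ∧ (i = 0 ∨ j = 0) := by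
  change i ≠ j ∧ ((i : ℕ) = 0 ∨ (j : ℕ) = 0) ↔ _
  rw [Fin.val_eq_zero_iff, Fin.val_eq_zero_iff]

theorem starGraph_dist_of_ne {i j : Fin N} (hij : i ≠ j) :
    (starGraph N).dist i j = if i = 0 ∨ j = 0 then 1 else 2 := by
  split_ifs with h
  · exact SimpleGraph.dist_eq_one_iff_adj.2 (starGraph_adj.2 ⟨hij, h⟩)
  · rw [not_or] at h
    have hcommon : 0 ∈ (starGraph N).commonNeighbors i j := by
      simp [SimpleGraph.mem_commonNeighbors, starGraph_adj, h.1, h.2]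
    rw [SimpleGraph.dist, SimpleGraph.edist_eq_two_iff.2
      ⟨hij, fun hadj => by simp_all [starGraph_adj], ⟨0, hcommon⟩⟩]
    rfl

variable (N)

def starLeft : Matrix (Fin N) (Fin 2) ℝ :=
  of fun i => ![1, if i = 0 then 1 else 0]

def starRight (t : ℝ) : Matrix (Fin 2) (Fin N) ℝ :=
  of ![fun j => if j = 0 then -1 else -t, fun j => if j = 0 then (N - 1) * (1 - t) else -(1 - t)]

variable {N}

theorem starRight_mul_starLeft (t : ℝ) :
    starRight N t * starLeft N = !![-(1 + (N - 1) * t), -1; 0, (N - 1) * (1 - t)] := by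
  ext k l
  fin_cases k <;> fin_cases l <;>
    simp [starLeft, starRight, mul_apply, Fin.sum_ite_eq_zero] <;> ring

theorem starLeft_mul_starRight_mulVec_one (t : ℝ) :
    (starLeft N * starRight N t) *ᵥ 1 = fun _ => -(1 + (N - 1) * t) := by
  ext i
  simp [starLeft, starRight, mulVec, dotProduct, mul_apply, Fin.sum_univ_two, sum_add_distrib,
    Fin.sum_ite_eq_zero]
  split_ifs <;> ring

theorem mellinLap_starGraph (s : ℝ) :
    mellinLap (starGraph N) s =
      starLeft N * starRight N ((2 : ℝ) ^ (-s)) +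
        scalar (Fin N) (1 + (N - 1) * (2 : ℝ) ^ (-s)) := by
  refine ext_of_offDiag_of_mulVec_one (fun i j hij => ?_) ?_
  · have hdist := starGraph_dist_of_ne hij
    rw [mellinLap_apply_of_dist_ne_zero _ _ (by rw [hdist]; split_ifs <;> omega), hdist]
    by_cases hi : i = 0 <;> by_cases hj : j = 0 <;>
      simp_all [starLeft, starRight, mul_apply, Fin.sum_univ_two]; ring
  · rw [mellinLap_mulVec_one, add_mulVec, starLeft_mul_starRight_mulVec_one]
    ext i
    simp [scalar_apply]

theorem charpoly_starRight_mul_starLeft (t : ℝ) :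
    (starRight N t * starLeft N).charpoly =
      (X + C (1 + (N - 1) * t)) * (X - C ((N - 1) * (1 - t))) := by
  rw [starRight_mul_starLeft, charpoly_fin_two, trace_fin_two_of, det_fin_two_of]
  simp only [map_add, map_sub, map_mul, map_neg, map_one, mul_zero, sub_zero]
  ring

end StarGraph

/-- For the star graph `S_N` with `N ≥ 3`, the eigenvalues of
`L̃_Mell(s)` are `0` (multiplicity 1), `N` (multiplicity 1) and `1 + (N−1)·2^{−s}`
(multiplicity `N − 2`); equivalently, its characteristic polynomial is
`X · (X − N) · (X − (1 + (N−1)·2^{−s}))^{N−2}`. -/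
theorem mellinLap_starGraph_eigenvalues (N : ℕ) (hN : 3 ≤ N) (s : ℝ) :
    (mellinLap (starGraph N) s).charpoly =
      Polynomial.X * (Polynomial.X - Polynomial.C (N : ℝ)) *
        (Polynomial.X - Polynomial.C (1 + ((N : ℝ) - 1) * (2 : ℝ) ^ (-s))) ^ (N - 2) := by
  have : NeZero N := ⟨by omega⟩
  have hN_split : C (N : ℝ) =
      C (1 + (N - 1) * (2 : ℝ) ^ (-s)) + C ((N - 1) * (1 - (2 : ℝ) ^ (-s))) := by
    rw [← C_add]
    ring_nf
  rw [mellinLap_starGraph, charpoly_add_scalar,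
    charpoly_mul_comm_of_le _ _ (by simp only [Fintype.card_fin]; omega),
    charpoly_starRight_mul_starLeft, hN_split]
  simp only [Fintype.card_fin, mul_comp, pow_comp, X_comp, C_comp, add_comp, sub_comp]
  ring
end
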